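/- arXiv:0905.0243 — 2 statements merged into one kernel-verified Lean document; each statement's English description precedes it below -/
import Mathlib

section
/- Let V be the ℚ-vector space with basis the set of all multi-indices, and extend ∗ : α ↦ α*, τ : α ↦ α^τ, and d ℚ-linearly to V. Then (∗ − τ)(V) = ((∗ − τ)∘d)(V); that is, the ℚ-span of the elements α* − α^τ over all multi-indices α equals the ℚ-span of the elements (∗ − τ)(d(α)) over all multi-indices α. -/
open scoped BigOperators

/-- A multi-index: a nonempty finite sequence of positive integers. -/
def MIdx (α : List ℕ) : Prop := α ≠ [] ∧ ∀ a ∈ α, 1 ≤ a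

/-- The set `S_m(α) = {α₁, α₁+α₂, …, α₁+⋯+α_{s-1}} ⊆ {1,…,m-1}` of proper partial sums. -/
def boundarySet (α : List ℕ) : Finset ℕ :=
  (((List.scanl (· + ·) 0 α).drop 1).dropLast).toFinset

def diffAux : ℕ → List ℕ → List ℕ
  | _, [] => []
  | p, a :: t => (a - p) :: diffAux a t

/-- The dual multi-index `α*`. -/
def dualIdx (α : List ℕ) : List ℕ :=
  diffAux 0 ((insert α.sum (Finset.Icc 1 (α.sum - 1) \ boundarySet α)).sort (· ≤ ·))

/-- The finite multiple harmonic sum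
`S_α(n) = Σ_{n > n₁ ≥ ⋯ ≥ n_s ≥ 0} 1/((n₁+1)^{α₁} ⋯ (n_s+1)^{α_s})`. -/
noncomputable def hsum : List ℕ → ℕ → ℝ
  | [], _ => 1
  | a :: t, n => ∑ m ∈ Finset.range n, (1 / ((m : ℝ) + 1) ^ a) * hsum t (m + 1)

open Classical in
/-- The summand of the multiple series `G_α(z)`, indexed by tuples
`v : Fin |α| → ℕ`; it vanishes unless all `v j` are positive and the chain of
comparisons dictated by `α` holds (strict within blocks, weak between blocks). -/
noncomputable def Gterm (α : List ℕ) (z : ℂ) (v : Fin α.sum → ℕ) : ℂ :=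
  if (∀ j, 0 < v j) ∧ (∀ j k : Fin α.sum, (k : ℕ) = (j : ℕ) + 1 →
        (if (k : ℕ) ∈ boundarySet α then v k ≤ v j else v k < v j))
  then ∏ j : Fin α.sum, (if (j : ℕ) = 0 then (1 / (v j : ℂ) - 1 / ((v j : ℂ) + z))
             else if (j : ℕ) ∈ boundarySet α then 1 / ((v j : ℂ) + z)
             else 1 / (v j : ℂ))
  else 0

/-- The multiple series `G_α(z)`. -/
noncomputable def Gfun (α : List ℕ) (z : ℂ) : ℂ := ∑' v : Fin α.sum → ℕ, Gterm α z v

/-- `⁻α` : remove 1 from the first entry. -/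
def lminus (α : List ℕ) : List ℕ :=
  match α with
  | [] => []
  | a :: t => if 2 ≤ a then (a - 1) :: t else t

/-- `α⁻` : remove 1 from the last entry. -/
def rminus (α : List ℕ) : List ℕ :=
  if 2 ≤ α.getLastD 0 then α.dropLast ++ [α.getLastD 0 - 1] else α.dropLast

/-- The difference operator `(Δa)(n) = a(n) - a(n+1)`. -/
def delOp (a : ℕ → ℂ) : ℕ → ℂ := fun n => a n - a (n + 1)

/-- The inversion operator `(∇a)(n) = (Δⁿa)(0)`. -/
def nablaOp (a : ℕ → ℂ) : ℕ → ℂ := fun n => delOp^[n] a 0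

/-- The generalized binomial coefficient `z(z-1)⋯(z-n+1)/n!`. -/
noncomputable def cbinom (z : ℂ) (n : ℕ) : ℂ :=
  (∏ i ∈ Finset.range n, (z - (i : ℂ))) / (n.factorial : ℂ)

/-- The Newton series with coefficients `c` converges at `z` to `L`. -/
def NewtonSeriesTo (c : ℕ → ℂ) (z L : ℂ) : Prop :=
  Filter.Tendsto (fun N => ∑ n ∈ Finset.range N, (-1 : ℂ) ^ n * c n * cbinom z n)
    Filter.atTop (nhds L)

/-- The Newton series interpolating the sequence `a` converges at `z` to `L`. -/
def NewtonSumsTo (a : ℕ → ℂ) (z L : ℂ) : Prop := NewtonSeriesTo (nablaOp a) z L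

open Classical in
/-- `ζ_α(μ)` : the nested sum over tuples patterned on `α` with exponents `μ`. -/
noncomputable def zetaIdx (α : List ℕ) (μ : List ℕ) : ℝ :=
  ∑' v : Fin α.sum → ℕ,
    if (∀ j, 0 < v j) ∧ (∀ j k : Fin α.sum, (k : ℕ) = (j : ℕ) + 1 →
          (if (k : ℕ) ∈ boundarySet α then v k ≤ v j else v k < v j))
    then ∏ j : Fin α.sum, (1 : ℝ) / (v j : ℝ) ^ (μ.getD (j : ℕ) 1)
    else 0

/-- The multiple zeta value `ζ(μ) = ζ_{(p)}(μ)`. -/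
noncomputable def MZV (μ : List ℕ) : ℝ := zetaIdx [μ.length] μ

/-- `⁺μ` : add 1 to the first entry. -/
def mplus : List ℕ → List ℕ
  | [] => []
  | a :: t => (a + 1) :: t

/-- `ζ` extended ℚ-linearly to the vector space with basis the multi-indices. -/
noncomputable def zetaLin (v : List ℕ →₀ ℚ) : ℝ := v.sum fun μ c => (c : ℝ) * MZV μ

/-- `ζ⁺(μ) = ζ(⁺μ)`, extended ℚ-linearly. -/
noncomputable def zetaPlusLin (v : List ℕ →₀ ℚ) : ℝ := v.sum fun μ c => (c : ℝ) * MZV (mplus μ)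

/-- All ways of splitting a list into consecutive nonempty blocks. -/
def splits : List ℕ → List (List (List ℕ))
  | [] => [[]]
  | a :: t =>
      (splits t).map (fun c => [a] :: c) ++
      (splits t).filterMap (fun c =>
        match c with
        | [] => none
        | b :: r => some ((a :: b) :: r))

/-- `d(α) = Σ_{β ≤ α} β`, the sum over all coarsenings of `α`. -/
noncomputable def dmap (α : List ℕ) : List ℕ →₀ ℚ :=
  ((splits α).map fun c => Finsupp.single (c.map List.sum) (1 : ℚ)).sum

/-- All compositions of `n` into positive parts. -/
def comps : ℕ → List (List ℕ)
  | 0 => [[]]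
  | n + 1 => (List.range (n + 1)).flatMap fun j => (comps (n - j)).map fun c => (j + 1) :: c

/-- All refinements of `α`. -/
def refts : List ℕ → List (List ℕ)
  | [] => [[]]
  | a :: t => (comps a).flatMap fun c => (refts t).map fun β => c ++ β

/-- `u(α) = Σ_{β ≥ α} β`, the sum over all refinements of `α`. -/
noncomputable def umap (α : List ℕ) : List ℕ →₀ ℚ :=
  ((refts α).map fun β => Finsupp.single β (1 : ℚ)).sum

/-- The harmonic (quasi-shuffle) product on multi-indices, with values in the
ℚ-vector space with basis the multi-indices. -/
noncomputable def hprod : List ℕ → List ℕ → (List ℕ →₀ ℚ)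
  | [], u => Finsupp.single u 1
  | a :: s, [] => Finsupp.single (a :: s) 1
  | a :: s, b :: t =>
      Finsupp.mapDomain (List.cons a) (hprod s (b :: t)) +
      Finsupp.mapDomain (List.cons b) (hprod (a :: s) t) +
      Finsupp.mapDomain (List.cons (a + b)) (hprod s t)
  termination_by l₁ l₂ => l₁.length + l₂.length

/-- `α ⊛ β = (α₁+β₁) # (⁻α ∗ ⁻β)`. -/
noncomputable def circAst : List ℕ → List ℕ → (List ℕ →₀ ℚ)
  | a :: s, b :: t =>
      Finsupp.mapDomain (List.cons (a + b)) (hprod (lminus (a :: s)) (lminus (b :: t)))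
  | _, _ => 0

/-- `⊛` extended linearly in the first argument. -/
noncomputable def circAstLin (v : List ℕ →₀ ℚ) (β : List ℕ) : List ℕ →₀ ℚ :=
  v.sum fun γ c => c • circAst γ β

/-- The exponent list `(k₁+1,1,…,1, k₂+1,1,…,1, …, k_s+1,1,…,1)`, the `i`-th block
having length `α_i`. -/
def blockList (α : List ℕ) (ks : Fin α.length → ℕ) : List ℕ :=
  (List.ofFn fun i => (ks i + 1) :: List.replicate (α.get i - 1) 1).flatten

/-- `Q_r(n₁,…,n_r; z) = 1/((n₁+z)⋯(n_r+z))`, with `Q_0 = 1`. -/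
noncomputable def Qprod (l : List ℕ) (z : ℂ) : ℂ := (l.map fun n => 1 / ((n : ℂ) + z)).prod

/-- `R_r(n₁,…,n_r) = 1/(n₁⋯n_r)`, with `R_0 = 1`. -/
noncomputable def Rprod (l : List ℕ) : ℂ := (l.map fun n => 1 / (n : ℂ)).prod

/-- A block of `len` variables of factor type `fTy` (1 = Q-type, 2 = R-type); the first
carries the comparison `joinWeak` to the previous variable, subsequent ones carry the
block-internal comparison (weak inside Q-blocks, strict inside R-blocks). -/
def blockPart (fTy : ℕ) (joinWeak : Bool) : ℕ → List (ℕ × Bool)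
  | 0 => []
  | m + 1 => (fTy, joinWeak) :: List.replicate m (fTy, fTy == 1)

/-- The word of (factor type, comparison) pairs describing a `Φ`-sum: `qr` is the
weakness of the `□'` joins (Q-block to R-block) and `rq` that of the `□` joins
(R-block to next Q-block). -/
def mkWord (qr rq : Bool) (gs : List (ℕ × ℕ)) : List (ℕ × Bool) :=
  gs.flatMap fun g => blockPart 1 rq g.1 ++ blockPart 2 qr g.2

/-- The word of a `Φ`-sum: the very first factor is of `Q̃`-type (coded 0). -/
def phiWord (qr rq : Bool) (gs : List (ℕ × ℕ)) : List (ℕ × Bool) :=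
  match mkWord qr rq gs with
  | [] => []
  | (_, b) :: t => (0, b) :: t

open Classical in
/-- The nested sum `Φ_z` attached to a word `w` of (factor type, comparison) pairs:
factor type 0 gives `1/n - 1/(n+z)`, type 1 gives `1/(n+z)`, type 2 gives `1/n`;
comparison `true` means `≥`, `false` means `>`. -/
noncomputable def PhiSum (w : List (ℕ × Bool)) (z : ℂ) : ℂ :=
  ∑' v : Fin w.length → ℕ,
    if (∀ j, 0 < v j) ∧ (∀ j k : Fin w.length, (k : ℕ) = (j : ℕ) + 1 →
          (if (w.get k).2 then v k ≤ v j else v k < v j))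
    then ∏ j : Fin w.length, (if (w.get j).1 = 0 then (1 / (v j : ℂ) - 1 / ((v j : ℂ) + z))
               else if (w.get j).1 = 1 then 1 / ((v j : ℂ) + z)
               else 1 / (v j : ℂ))
    else 0

/-- The linear extension of `∗ - τ : α ↦ α* - α^τ` to the ℚ-vector space with basis
the multi-indices. -/
noncomputable def stMap (v : List ℕ →₀ ℚ) : List ℕ →₀ ℚ :=
  v.sum fun β c => c • (Finsupp.single (dualIdx β) (1 : ℚ) - Finsupp.single β.reverse 1)

lemma splits_spec : ∀ (α : List ℕ), ∀ c ∈ splits α, c.flatten = α ∧ ∀ b ∈ c, b ≠ [] := by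
  intro α
  induction α with
  | nil => intro c hc; simp [splits] at hc; subst hc; simp
  | cons a t ih =>
    intro c hc
    simp only [splits, List.mem_append, List.mem_map, List.mem_filterMap] at hc
    rcases hc with ⟨c', hc', rfl⟩ | ⟨c', hc', h⟩
    · obtain ⟨h1, h2⟩ := ih c' hc'
      refine ⟨by simp [h1], ?_⟩
      intro b hb
      rcases List.mem_cons.mp hb with rfl | hb
      · simp
      · exact h2 b hb
    · cases c' with
      | nil => simp at h
      | cons b r =>
        obtain ⟨h1, h2⟩ := ih (b :: r) hc'
        cases Option.some.inj h
        refine ⟨?_, ?_⟩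
        · simp only [List.flatten_cons] at h1 ⊢
          simp [h1]
        · intro x hx
          rcases List.mem_cons.mp hx with rfl | hx
          · simp
          · exact h2 x (by simp [hx])

lemma flatten_length_le (c : List (List ℕ)) (h : ∀ b ∈ c, b ≠ []) :
    c.length ≤ c.flatten.length := by
  induction c with
  | nil => simp
  | cons b r ih =>
    simp only [List.flatten_cons, List.length_append, List.length_cons]
    have hb : 1 ≤ b.length := List.length_pos_iff.mpr (h b (by simp))
    have := ih (fun x hx => h x (by simp [hx]))
    omega

lemma splits_length_le {α : List ℕ} {c} (hc : c ∈ splits α) : c.length ≤ α.length := by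
  obtain ⟨h1, h2⟩ := splits_spec α c hc
  calc c.length ≤ c.flatten.length := flatten_length_le c h2
  _ = α.length := by rw [h1]

lemma splits_eq_cons : ∀ α : List ℕ, ∃ rest, splits α = (α.map fun a => [a]) :: rest ∧
    ∀ c ∈ rest, c.length < α.length := by
  intro α
  induction α with
  | nil => exact ⟨[], by simp [splits], by simp⟩
  | cons a t ih =>
    obtain ⟨rest, h1, h2⟩ := ih
    refine ⟨rest.map (fun c => [a] :: c) ++ (splits t).filterMap (fun c =>
      match c with | [] => none | b :: r => some ((a :: b) :: r)), ?_, ?_⟩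
    · simp [splits, h1]
    · intro c hc
      rcases List.mem_append.mp hc with hc | hc
      · obtain ⟨c', hc', rfl⟩ := List.mem_map.mp hc
        have := h2 c' hc'
        simp only [List.length_cons, List.length_map]
        omega
      · obtain ⟨c', hc', h⟩ := List.mem_filterMap.mp hc
        cases c' with
        | nil => simp at h
        | cons b r =>
          have hle := splits_length_le hc'
          cases Option.some.inj h
          simp only [List.length_cons] at hle ⊢
          omega

lemma stMap_single (β : List ℕ) (c : ℚ) :
    stMap (Finsupp.single β c) =
      c • (Finsupp.single (dualIdx β) (1 : ℚ) - Finsupp.single β.reverse 1) := by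
  unfold stMap
  rw [Finsupp.sum_single_index]
  simp

lemma stMap_add (v w : List ℕ →₀ ℚ) : stMap (v + w) = stMap v + stMap w := by
  unfold stMap
  exact Finsupp.sum_add_index (fun β _ => by simp) (fun β _ c d => add_smul c d _)

lemma stMap_list_sum (l : List (List ℕ →₀ ℚ)) : stMap l.sum = (l.map stMap).sum := by
  induction l with
  | nil => simp [stMap]
  | cons a t ih => simp [stMap_add, ih]

lemma midx_coarsen {α : List ℕ} (hα : MIdx α) {c} (hc : c ∈ splits α) :
    MIdx (c.map List.sum) := by
  obtain ⟨h1, h2⟩ := splits_spec α c hc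
  constructor
  · simp only [ne_eq, List.map_eq_nil_iff]
    rintro rfl
    exact hα.1 h1.symm
  · intro x hx
    obtain ⟨b, hb, rfl⟩ := List.mem_map.mp hx
    have hbne := h2 b hb
    cases b with
    | nil => exact absurd rfl hbne
    | cons y ys =>
      have hy : 1 ≤ y := hα.2 y (by
        rw [← h1]
        exact List.mem_flatten.mpr ⟨y :: ys, hb, by simp⟩)
      simp only [List.sum_cons]
      omega

lemma dmap_eq_cons (α : List ℕ) :
    ∃ rest, splits α = (α.map fun a => [a]) :: rest ∧
      (∀ c ∈ rest, c.length < α.length) ∧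
      dmap α = Finsupp.single α 1 +
        ((rest.map fun c => Finsupp.single (c.map List.sum) (1 : ℚ))).sum := by
  obtain ⟨rest, h1, h2⟩ := splits_eq_cons α
  refine ⟨rest, h1, h2, ?_⟩
  unfold dmap
  rw [h1]
  simp only [List.map_cons, List.sum_cons, List.map_map]
  congr 2
  · simp [List.map_map, Function.comp_def]


/-- `(∗ - τ)(V) = ((∗ - τ) ∘ d)(V)`: the ℚ-span of the elements
`α* - α^τ` over all multi-indices `α` equals the ℚ-span of the elements
`(∗ - τ)(d(α))`. -/
theorem duality_span_eq :
    Submodule.span ℚ {x : List ℕ →₀ ℚ | ∃ α : List ℕ, MIdx α ∧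
        x = Finsupp.single (dualIdx α) 1 - Finsupp.single α.reverse 1} =
    Submodule.span ℚ {x : List ℕ →₀ ℚ | ∃ α : List ℕ, MIdx α ∧ x = stMap (dmap α)} := by
  set T := Submodule.span ℚ {x : List ℕ →₀ ℚ | ∃ α : List ℕ, MIdx α ∧ x = stMap (dmap α)}
    with hT
  have key : ∀ n, ∀ α : List ℕ, α.length ≤ n → MIdx α →
      stMap (Finsupp.single α 1) ∈ T := by
    intro n
    induction n with
    | zero =>
      intro α h hα
      exact absurd (List.length_eq_zero_iff.mp (Nat.le_zero.mp h)) hα.1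
    | succ n ih =>
      intro α hlen hα
      obtain ⟨rest, h1, h2, h3⟩ := dmap_eq_cons α
      have hgen : stMap (dmap α) ∈ T := Submodule.subset_span ⟨α, hα, rfl⟩
      have hrest : stMap ((rest.map fun c =>
          Finsupp.single (c.map List.sum) (1 : ℚ))).sum ∈ T := by
        rw [stMap_list_sum]
        apply list_sum_mem
        intro x hx
        simp only [List.map_map, List.mem_map, Function.comp_apply] at hx
        obtain ⟨c, hc, rfl⟩ := hx
        have hcs : c ∈ splits α := by rw [h1]; exact List.mem_cons_of_mem _ hc
        have hm := midx_coarsen hα hcs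
        have hcl := h2 c hc
        have hl : (c.map List.sum).length ≤ n := by
          simp only [List.length_map]; omega
        exact ih _ hl hm
      have heq : stMap (Finsupp.single α 1) = stMap (dmap α) -
          stMap ((rest.map fun c => Finsupp.single (c.map List.sum) (1 : ℚ))).sum := by
        rw [h3, stMap_add]; abel
      rw [heq]
      exact Submodule.sub_mem T hgen hrest
  apply le_antisymm
  · rw [Submodule.span_le]
    rintro x ⟨α, hα, rfl⟩
    have := key α.length α le_rfl hα
    rwa [stMap_single, one_smul] at this
  · rw [Submodule.span_le]
    rintro x ⟨α, hα, rfl⟩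
    unfold dmap
    rw [stMap_list_sum]
    apply list_sum_mem
    intro x hx
    simp only [List.map_map, List.mem_map, Function.comp_apply] at hx
    obtain ⟨c, hc, rfl⟩ := hx
    have hm := midx_coarsen hα hc
    rw [stMap_single, one_smul]
    exact Submodule.subset_span ⟨c.map List.sum, hm, rfl⟩
end

section
/- For every multi-index α there exists a constant A > 0 such that |G_α(z)| ≤ A·|z| for every z ∈ ℂ with Re z ≥ 0. -/
/-!
On the summation domain the variables decrease weakly from the first one `n`, which is thus the
largest. For `Re z ≥ 0` the first factor `1/n - 1/(n+z) = z/(n(n+z))` has modulus at most `|z|/n²`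
and every other factor at most `1/n_j`. Since `n` dominates the geometric mean of all `s = |α|`
variables, `|z|/n² ∏_{j>1} 1/n_j ≤ |z| ∏_j n_j^{-(1+1/s)}`, and the latter sums to `|z| ζ(1+1/s)^s`.
-/

open scoped BigOperators

lemma summable_prod_apply_of_nonneg {β : Type*} {g : β → ℝ} (hg : Summable g)
    (hg0 : ∀ b, 0 ≤ g b) (s : ℕ) : Summable fun v : Fin s → β => ∏ j, g (v j) := by
  induction s with
  | zero => exact Summable.of_finite
  | succ s ih =>
    have hpair := hg.mul_of_nonneg ih hg0 fun v => Finset.prod_nonneg fun j _ => hg0 (v j)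
    refine ((Fin.consEquiv fun _ => β).symm.summable_iff.mpr hpair).congr fun v => ?_
    simp [Fin.consEquiv, Fin.prod_univ_succ, Fin.tail]

lemma inv_mul_prod_inv_le_prod_inv_rpow {s : ℕ} {w : Fin s → ℝ} (j₀ : Fin s)
    (hw : ∀ j, 0 < w j) (hmax : ∀ j, w j ≤ w j₀) :
    (w j₀)⁻¹ * ∏ j, (w j)⁻¹ ≤ ∏ j, (w j ^ (1 + 1 / s : ℝ))⁻¹ := by
  have hs : (s : ℝ) ≠ 0 := Nat.cast_ne_zero.mpr (Fin.pos j₀).ne'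
  have hconst : (w j₀)⁻¹ = ∏ _j : Fin s, (w j₀ ^ (1 / s : ℝ))⁻¹ := by
    rw [Fin.prod_const, inv_pow, ← Real.rpow_natCast, ← Real.rpow_mul (hw j₀).le,
      one_div_mul_cancel hs, Real.rpow_one]
  calc (w j₀)⁻¹ * ∏ j, (w j)⁻¹ = ∏ j, (w j₀ ^ (1 / s : ℝ))⁻¹ * (w j)⁻¹ := by
        rw [hconst, Finset.prod_mul_distrib]
    _ ≤ ∏ j, (w j ^ (1 / s : ℝ))⁻¹ * (w j)⁻¹ := by
        have hw₀ := hw j₀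
        refine Finset.prod_le_prod (fun j _ => by have := hw j; positivity) fun j _ => ?_
        have hwj := hw j
        gcongr
        exact hmax j
    _ = ∏ j, (w j ^ (1 + 1 / s : ℝ))⁻¹ := by
        refine Finset.prod_congr rfl fun j _ => ?_
        rw [Real.rpow_add (hw j), Real.rpow_one, mul_inv, mul_comm]

section HalfPlane

variable {z : ℂ} (hz : 0 ≤ z.re)
include hz

lemma le_norm_ofReal_add (x : ℝ) : x ≤ ‖(x : ℂ) + z‖ :=
  calc x ≤ ((x : ℂ) + z).re := by simpa using hz
    _ ≤ ‖(x : ℂ) + z‖ := Complex.re_le_norm _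

lemma norm_one_div_ofReal_add_le {x : ℝ} (hx : 0 < x) : ‖1 / ((x : ℂ) + z)‖ ≤ x⁻¹ := by
  rw [norm_div, norm_one, one_div]
  exact inv_anti₀ hx (le_norm_ofReal_add hz x)

lemma norm_one_div_sub_one_div_ofReal_add_le {x : ℝ} (hx : 0 < x) :
    ‖1 / (x : ℂ) - 1 / ((x : ℂ) + z)‖ ≤ ‖z‖ / x ^ 2 := by
  have hxz := le_norm_ofReal_add hz x
  have hne : (x : ℂ) + z ≠ 0 := norm_pos_iff.mp (hx.trans_le hxz)
  rw [div_sub_div _ _ (Complex.ofReal_ne_zero.mpr hx.ne') hne, one_mul, mul_one,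
    add_sub_cancel_left, norm_div, norm_mul, Complex.norm_real, Real.norm_of_nonneg hx.le, sq]
  gcongr

end HalfPlane

lemma MIdx.sum_pos {α : List ℕ} (hα : MIdx α) : 0 < α.sum := by
  obtain ⟨hne, hpos⟩ := hα
  obtain ⟨a, t, rfl⟩ := List.exists_cons_of_ne_nil hne
  have := hpos a List.mem_cons_self
  rw [List.sum_cons]
  omega

lemma norm_Gterm_le {α : List ℕ} (hs : 0 < α.sum) {z : ℂ} (hz : 0 ≤ z.re)
    (v : Fin α.sum → ℕ) :
    ‖Gterm α z v‖ ≤ ‖z‖ * ∏ j, ((v j : ℝ) ^ (1 + 1 / α.sum : ℝ))⁻¹ := by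
  unfold Gterm
  split_ifs with hv
  swap
  · rw [norm_zero]
    exact mul_nonneg (norm_nonneg z) (Finset.prod_nonneg fun j _ => by positivity)
  obtain ⟨hpos, hchain⟩ := hv
  let j₀ : Fin α.sum := ⟨0, hs⟩
  have hanti : Antitone v := (antitone_iff_forall_covBy v).mpr fun j k hjk => by
    have h := hchain j k (Nat.covBy_iff_add_one_eq.mp (Fin.covBy_iff.mp hjk)).symm
    split_ifs at h
    exacts [h, h.le]
  have hw : ∀ j, (0 : ℝ) < v j := fun j => Nat.cast_pos.mpr (hpos j)
  calc ‖∏ j, _‖ = ∏ j, ‖_‖ := norm_prod _ _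
    _ ≤ ∏ j, (if j = j₀ then ‖z‖ / v j else 1) * (v j : ℝ)⁻¹ := by
        refine Finset.prod_le_prod (fun _ _ => norm_nonneg _) fun j _ => ?_
        by_cases hj : (j : ℕ) = 0
        · rw [if_pos hj, if_pos (Fin.ext hj)]
          calc _ ≤ ‖z‖ / (v j : ℝ) ^ 2 := by
                simpa using norm_one_div_sub_one_div_ofReal_add_le hz (hw j)
            _ = ‖z‖ / v j * (v j : ℝ)⁻¹ := by ring
        · rw [if_neg hj, if_neg fun h => hj (congrArg Fin.val h), one_mul]
          split_ifs
          · simpa using norm_one_div_ofReal_add_le hz (hw j)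
          · simp
    _ = ‖z‖ * ((v j₀ : ℝ)⁻¹ * ∏ j, (v j : ℝ)⁻¹) := by
        rw [Finset.prod_mul_distrib, Finset.prod_ite_eq', if_pos (Finset.mem_univ _)]
        ring
    _ ≤ ‖z‖ * ∏ j, ((v j : ℝ) ^ (1 + 1 / α.sum : ℝ))⁻¹ := by
        gcongr
        exact inv_mul_prod_inv_le_prod_inv_rpow j₀ hw
          fun j => Nat.cast_le.mpr (hanti (Nat.zero_le j))

/-- For every multi-index `α` there is a constant `A > 0` with
`|G_α(z)| ≤ A|z|` whenever `Re z ≥ 0`. -/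
theorem Gfun_linear_bound (α : List ℕ) (hα : MIdx α) :
    ∃ A : ℝ, 0 < A ∧ ∀ z : ℂ, 0 ≤ z.re →
      ‖Gfun α z‖ ≤ A * ‖z‖ := by
  have hs := hα.sum_pos
  set g : ℕ → ℝ := fun n => ((n : ℝ) ^ (1 + 1 / α.sum : ℝ))⁻¹
  have hg : Summable g := Real.summable_nat_rpow_inv.mpr
    (lt_add_of_pos_right 1 (one_div_pos.mpr (Nat.cast_pos.mpr hs)))
  have hG := summable_prod_apply_of_nonneg hg (fun n => by positivity) α.sum
  set C := ∑' v : Fin α.sum → ℕ, ∏ j, g (v j)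
  have hC : 0 ≤ C := tsum_nonneg fun v => Finset.prod_nonneg fun j _ => by positivity
  refine ⟨C + 1, by linarith, fun z hz => ?_⟩
  calc ‖Gfun α z‖ ≤ ‖z‖ * C :=
        tsum_of_norm_bounded (hG.hasSum.mul_left ‖z‖) (norm_Gterm_le hs hz)
    _ ≤ (C + 1) * ‖z‖ := by nlinarith [norm_nonneg z]
end
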